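/- arXiv:2403.16588 — 3 statements merged into one kernel-verified Lean document; each statement's English description precedes it below -/
import Mathlib

section
/- For any ℓ, k, k' ∈ ℕ, the 3D radial Zernike polynomials satisfy the orthonormality relation ∫₀¹ R_ℓ^k(r) R_ℓ^{k'}(r) r² dr = δ_{k,k'}, where R_ℓ^k(r) = √(2ℓ+4k+3) Σ_{s=0}^k (−1)^s C(k,s) C(ℓ+2k−s+1/2, k) r^{ℓ+2k−2s} and C(x,n) = Γ(x+1)/(n!·Γ(x−n+1)). -/
noncomputable section

/-- The generalized binomial coefficient `C(x, n) = Γ(x+1) / (n! · Γ(x-n+1))`. -/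
def genBinom (x : ℝ) (n : ℕ) : ℝ :=
  Real.Gamma (x + 1) / (n.factorial * Real.Gamma (x - n + 1))

/-- The 3D radial Zernike polynomial
`R_ℓ^k(r) = √(2ℓ+4k+3) Σ_{s=0}^k (−1)^s C(k,s) C(ℓ+2k−s+1/2, k) r^{ℓ+2k−2s}`. -/
def zernikeR (ℓ k : ℕ) (r : ℝ) : ℝ :=
  Real.sqrt (2 * ℓ + 4 * k + 3) *
    ∑ s ∈ Finset.range (k + 1),
      (-1 : ℝ) ^ s * (k.choose s) * genBinom ((ℓ : ℝ) + 2 * k - s + 1 / 2) k *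
        r ^ (ℓ + 2 * k - 2 * s)
/-!
Reindexing `s = k - u`, `R_ℓ^k(r) = Σ_u c_u r^{ℓ+2u}` with
`c_u ∝ (-1)^{k-u} C(k,u) (ℓ+3/2+u)^{(k)}` (rising factorial). Hence the moment
`∫₀¹ R_ℓ^k(r) r^{ℓ+2j} r² dr` is, up to a constant, the `k`-th forward difference at `0` of
`u ↦ P(u) / (u + ℓ + 3/2 + j)`, where `P(u) = (u + ℓ + 3/2)^{(k)}` has degree `k`. Splitting off
the pole, the polynomial part is killed by the `k`-th difference, and what remains is
`P(-(ℓ+3/2+j)) = (-j)^{(k)} = (-1)^k j^{\underline{k}}` times the `k`-th difference of `1/(x+u)`.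
So `R_ℓ^k` is orthogonal to `r^{ℓ+2j}` for `j < k`, hence to `R_ℓ^{k'}` for `k' < k`; for `k' = k`
only the leading coefficient of `R_ℓ^{k}` contributes, and the factor `√(2ℓ+4k+3)` normalizes
the result to `1`.
-/

open Finset Polynomial fwdDiff

theorem fwdDiff_iter_one_eq_sum {R : Type*} [CommRing R] (f : R → R) (n : ℕ) (y : R) :
    Δ_[1] ^[n] f y = ∑ u ∈ range (n + 1), (-1) ^ (n - u) * n.choose u * f (y + u) := by
  simp [fwdDiff_iter_eq_sum_shift, zsmul_eq_mul]

theorem Polynomial.sum_range_neg_one_pow_mul_choose_mul_eval_eq_zero {R : Type*} [CommRing R]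
    (P : R[X]) {n : ℕ} (hP : P.degree < n) :
    ∑ u ∈ range (n + 1), (-1) ^ (n - u) * n.choose u * P.eval (u : R) = 0 := by
  rcases eq_or_ne P 0 with rfl | hP0
  · simp
  simpa [fwdDiff_iter_one_eq_sum] using
    congr_fun (fwdDiff_iter_eq_zero_of_degree_lt ((natDegree_lt_iff_degree_lt hP0).2 hP)) 0

theorem ascPochhammer_eval_ne_zero {R : Type*} [CommRing R] [IsDomain R] (n : ℕ) {x : R}
    (hx : ∀ i : ℕ, x ≠ -i) : (ascPochhammer R n).eval x ≠ 0 := fun h => by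
  obtain ⟨i, -, hi⟩ := (ascPochhammer_eval_eq_zero_iff n x).1 h
  exact hx i (by rw [hi, neg_neg])

section Field

variable {K : Type*} [Field K]

theorem fwdDiff_iter_inv (n : ℕ) {x : K} (hx : ∀ i : ℕ, x ≠ -i) :
    Δ_[1] ^[n] (fun t : K => t⁻¹) x =
      (-1) ^ n * n.factorial / (ascPochhammer K (n + 1)).eval x := by
  induction n generalizing x with
  | zero => simp
  | succ n ih =>
    have hx1 : ∀ i : ℕ, x + 1 ≠ -i := fun i h => hx (i + 1) (by push_cast; linear_combination h)
    have hleft : (ascPochhammer K (n + 2)).eval x =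
        x * (ascPochhammer K (n + 1)).eval (x + 1) := by
      simp [ascPochhammer_succ_left K (n + 1), eval_comp]
    have hright : (ascPochhammer K (n + 2)).eval x =
        (ascPochhammer K (n + 1)).eval x * (x + (n + 1)) := by
      rw [ascPochhammer_succ_eval]
      push_cast
      ring
    rw [Function.iterate_succ_apply', fwdDiff, ih hx1, ih hx,
      div_sub_div _ _ (ascPochhammer_eval_ne_zero _ hx1) (ascPochhammer_eval_ne_zero _ hx),
      div_eq_div_iff (mul_ne_zero (ascPochhammer_eval_ne_zero _ hx1)
        (ascPochhammer_eval_ne_zero _ hx)) (ascPochhammer_eval_ne_zero _ hx), Nat.factorial_succ]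
    push_cast
    linear_combination (-1) ^ n * (n.factorial : K) * ((ascPochhammer K (n + 1)).eval x * hleft
      - (ascPochhammer K (n + 1)).eval (x + 1) * hright)

theorem sum_range_neg_one_pow_mul_choose_div (n : ℕ) {x : K} (hx : ∀ i : ℕ, x ≠ -i) :
    ∑ u ∈ range (n + 1), (-1) ^ (n - u) * n.choose u / (x + u) =
      (-1) ^ n * n.factorial / (ascPochhammer K (n + 1)).eval x := by
  simpa [fwdDiff_iter_one_eq_sum, div_eq_mul_inv] using fwdDiff_iter_inv n hx

theorem Polynomial.sum_range_neg_one_pow_mul_choose_mul_eval_div (P : K[X]) {n : ℕ}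
    (hP : P.degree ≤ n) {x : K} (hx : ∀ i : ℕ, x ≠ -i) :
    ∑ u ∈ range (n + 1), (-1) ^ (n - u) * n.choose u * (P.eval (u : K) / (x + u)) =
      P.eval (-x) * ((-1) ^ n * n.factorial / (ascPochhammer K (n + 1)).eval x) := by
  set Q := P /ₘ (X - C (-x))
  have hQ : Q.degree < n := by
    rcases eq_or_ne P 0 with rfl | hP0
    · simp [Q]
    exact (degree_divByMonic_lt _ _ hP0 (by simp)).trans_le hP
  have hsplit (u : ℕ) : P.eval (u : K) / (x + u) = Q.eval (u : K) + P.eval (-x) / (x + u) := by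
    have hxu : x + u ≠ 0 := fun h => hx u (eq_neg_of_add_eq_zero_left h)
    have := congr_arg (eval (u : K)) (modByMonic_add_div P (X - C (-x)))
    rw [modByMonic_X_sub_C_eq_C_eval] at this
    simp only [eval_add, eval_C, eval_mul, eval_sub, eval_X] at this
    field_simp
    linear_combination -this
  simp_rw [hsplit, mul_add, sum_add_distrib,
    sum_range_neg_one_pow_mul_choose_mul_eval_eq_zero Q hQ, zero_add,
    ← sum_range_neg_one_pow_mul_choose_div n hx, mul_sum]
  exact sum_congr rfl fun u _ => by ring

end Field

theorem Real.Gamma_add_nat_eq_ascPochhammer_mul {y : ℝ} (hy : 0 < y) (n : ℕ) :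
    Real.Gamma (y + n) = (ascPochhammer ℝ n).eval y * Real.Gamma y := by
  induction n with
  | zero => simp
  | succ n ih =>
    rw [Nat.cast_succ, ← add_assoc, Real.Gamma_add_one (by positivity), ih,
      ascPochhammer_succ_eval]
    ring

theorem genBinom_eq_ascPochhammer {x : ℝ} {k : ℕ} (hx : (k : ℝ) - 1 < x) :
    genBinom x k = (ascPochhammer ℝ k).eval (x - k + 1) / k.factorial := by
  have hy : 0 < x - k + 1 := by linarith
  rw [genBinom, show x + 1 = x - k + 1 + k by ring, Real.Gamma_add_nat_eq_ascPochhammer_mul hy,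
    mul_comm (k.factorial : ℝ), ← div_div, mul_div_cancel_right₀ _ (Real.Gamma_pos_of_pos hy).ne']

theorem intervalIntegral_sum_mul_pow_mul {ι : Type*} (s : Finset ι) (c : ι → ℝ) (e : ι → ℕ)
    {g : ℝ → ℝ} {a b : ℝ} (hg : IntervalIntegrable g MeasureTheory.volume a b) :
    ∫ r in a..b, (∑ i ∈ s, c i * r ^ e i) * g r = ∑ i ∈ s, c i * ∫ r in a..b, r ^ e i * g r := by
  simp_rw [sum_mul, mul_assoc]
  rw [intervalIntegral.integral_finsetSum fun i _ =>
    (hg.continuousOn_mul (continuousOn_pow _)).const_mul _]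
  simp_rw [intervalIntegral.integral_const_mul]

def zernikeCoeff (ℓ k u : ℕ) : ℝ :=
  √(2 * ℓ + 4 * k + 3) *
    ((-1) ^ (k - u) * k.choose u * (ascPochhammer ℝ k).eval ((ℓ : ℝ) + 3 / 2 + u) / k.factorial)

theorem zernikeR_eq_sum (ℓ k : ℕ) (r : ℝ) :
    zernikeR ℓ k r = ∑ u ∈ range (k + 1), zernikeCoeff ℓ k u * r ^ (ℓ + 2 * u) := by
  rw [zernikeR, mul_sum, ← sum_range_reflect]
  refine sum_congr rfl fun u hu => ?_
  have hu : u ≤ k := Nat.lt_succ_iff.mp (mem_range.mp hu)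
  have hcast : ((k - u : ℕ) : ℝ) = k - u := Nat.cast_sub hu
  rw [Nat.add_sub_cancel,
    genBinom_eq_ascPochhammer (by rw [hcast]; linarith [Nat.cast_nonneg (α := ℝ) u]),
    Nat.choose_symm hu, show ℓ + 2 * k - 2 * (k - u) = ℓ + 2 * u by omega, zernikeCoeff, hcast]
  ring_nf

theorem integral_pow_mul_zernikeR_mul_sq (ℓ k j : ℕ) :
    ∫ r in (0 : ℝ)..1, r ^ (ℓ + 2 * j) * (zernikeR ℓ k r * r ^ 2) =
      √(2 * ℓ + 4 * k + 3) * j.descFactorial k /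
        (2 * (ascPochhammer ℝ (k + 1)).eval ((ℓ : ℝ) + 3 / 2 + j)) := by
  set a : ℝ := ℓ + 3 / 2 with ha_def
  have hx : ∀ i : ℕ, a + j ≠ -i := fun i h => by
    linarith [Nat.cast_nonneg (α := ℝ) i, Nat.cast_nonneg (α := ℝ) j]
  have hmonomial (u : ℕ) :
      ∫ r in (0 : ℝ)..1, r ^ (ℓ + 2 * u) * (r ^ (ℓ + 2 * j) * r ^ 2) = 1 / (2 * (a + j + u)) := by
    simp_rw [← pow_add]
    rw [integral_pow]
    push_cast
    ring
  set P : ℝ[X] := (ascPochhammer ℝ k).comp (X + C a)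
  have hP : P.degree ≤ k :=
    degree_le_of_natDegree_le (by simp [P, natDegree_comp, ascPochhammer_natDegree])
  have hPeval : P.eval (-(a + j)) = (-1) ^ k * j.descFactorial k := by
    simp [P, eval_comp, ascPochhammer_eval_neg_eq_descPochhammer,
      descPochhammer_eval_eq_descFactorial]
  have hsum : ∑ u ∈ range (k + 1), zernikeCoeff ℓ k u * (1 / (2 * (a + j + u))) =
      √(2 * ℓ + 4 * k + 3) / (2 * k.factorial) *
        ∑ u ∈ range (k + 1), (-1) ^ (k - u) * k.choose u * (P.eval (u : ℝ) / (a + j + u)) := by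
    rw [mul_sum]
    refine sum_congr rfl fun u _ => ?_
    simp only [zernikeCoeff, P, eval_comp, eval_add, eval_X, eval_C, ← ha_def, add_comm _ a,
      one_div, mul_inv]
    ring
  have hsq : ((-1 : ℝ) ^ k) ^ 2 = 1 := by rw [← pow_mul, mul_comm, pow_mul, neg_one_sq, one_pow]
  calc ∫ r in (0 : ℝ)..1, r ^ (ℓ + 2 * j) * (zernikeR ℓ k r * r ^ 2)
      = ∫ r in (0 : ℝ)..1, (∑ u ∈ range (k + 1), zernikeCoeff ℓ k u * r ^ (ℓ + 2 * u)) *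
          (r ^ (ℓ + 2 * j) * r ^ 2) := by
        refine intervalIntegral.integral_congr fun r _ => ?_
        simp only [zernikeR_eq_sum]
        ring
    _ = _ := by
      rw [intervalIntegral_sum_mul_pow_mul _ _ _
        ((by fun_prop : Continuous fun r : ℝ => r ^ (ℓ + 2 * j) * r ^ 2).intervalIntegrable 0 1)]
      simp_rw [hmonomial]
      rw [hsum, P.sum_range_neg_one_pow_mul_choose_mul_eval_div hP hx, hPeval]
      field_simp
      simp [hsq]

theorem integral_pow_mul_zernikeR_mul_sq_of_lt {ℓ k j : ℕ} (hjk : j < k) :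
    ∫ r in (0 : ℝ)..1, r ^ (ℓ + 2 * j) * (zernikeR ℓ k r * r ^ 2) = 0 := by
  simp [integral_pow_mul_zernikeR_mul_sq, Nat.descFactorial_eq_zero_iff_lt.2 hjk]

theorem zernikeCoeff_self_mul_integral_pow_mul_zernikeR_mul_sq (ℓ k : ℕ) :
    zernikeCoeff ℓ k k * ∫ r in (0 : ℝ)..1, r ^ (ℓ + 2 * k) * (zernikeR ℓ k r * r ^ 2) = 1 := by
  rw [integral_pow_mul_zernikeR_mul_sq, zernikeCoeff, Nat.descFactorial_self,
    ascPochhammer_succ_eval, Nat.sub_self, Nat.choose_self]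
  have hA : 0 < (ascPochhammer ℝ k).eval ((ℓ : ℝ) + 3 / 2 + k) :=
    ascPochhammer_pos _ _ (by positivity)
  have hN : √(2 * ℓ + 4 * k + 3) * √(2 * ℓ + 4 * k + 3) = 2 * ℓ + 4 * k + 3 :=
    Real.mul_self_sqrt (by positivity)
  generalize (ascPochhammer ℝ k).eval ((ℓ : ℝ) + 3 / 2 + k) = A at hA ⊢
  field_simp
  linear_combination hN

theorem integral_zernikeR_mul_zernikeR_mul_sq (ℓ k k' : ℕ) :
    ∫ r in (0 : ℝ)..1, zernikeR ℓ k r * zernikeR ℓ k' r * r ^ 2 =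
      ∑ t ∈ range (k + 1), zernikeCoeff ℓ k t *
        ∫ r in (0 : ℝ)..1, r ^ (ℓ + 2 * t) * (zernikeR ℓ k' r * r ^ 2) := by
  have hcont : Continuous fun r => zernikeR ℓ k' r * r ^ 2 := by
    unfold zernikeR
    fun_prop
  rw [← intervalIntegral_sum_mul_pow_mul _ _ _ (hcont.intervalIntegrable 0 1)]
  refine intervalIntegral.integral_congr fun r _ => ?_
  simp only [zernikeR_eq_sum ℓ k]
  ring

/-- Orthonormality of the 3D radial Zernike polynomials in `L²((0,1))` with weight `r²`:
`∫₀¹ R_ℓ^k(r) R_ℓ^{k'}(r) r² dr = δ_{k,k'}`. -/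
theorem zernikeR_orthonormal (ℓ k k' : ℕ) :
    ∫ r in (0 : ℝ)..1, zernikeR ℓ k r * zernikeR ℓ k' r * r ^ 2 =
      if k = k' then 1 else 0 := by
  wlog hle : k ≤ k' generalizing k k'
  · simpa only [mul_comm (zernikeR ℓ k _), eq_comm] using this k' k (le_of_not_ge hle)
  rw [integral_zernikeR_mul_zernikeR_mul_sq]
  rcases hle.lt_or_eq with hlt | rfl
  · rw [if_neg hlt.ne]
    refine sum_eq_zero fun t ht => ?_
    rw [integral_pow_mul_zernikeR_mul_sq_of_lt (by linarith [mem_range.1 ht]), mul_zero]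
  · rw [if_pos rfl, sum_range_succ, zernikeCoeff_self_mul_integral_pow_mul_zernikeR_mul_sq,
      sum_eq_zero fun t ht => by
        rw [integral_pow_mul_zernikeR_mul_sq_of_lt (mem_range.1 ht), mul_zero], zero_add]

end
end

section
/- For any ℓ, p, q ∈ ℕ with q ≤ p, the weighted inner product of the monomial r^{ℓ+2p} with the 3D radial Zernike polynomial R_ℓ^q equals ∫₀¹ r^{ℓ+2p} R_ℓ^q(r) r² dr = √(2ℓ+4q+3) · (p−q+1)_q / ((2ℓ+2p+3) · (ℓ+p+5/2)_q), where (x)_n denotes the Pochhammer symbol. -/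
noncomputable section

/-- The Pochhammer symbol (rising factorial): `(x)_n = Γ(x+n) / Γ(x)`. -/
def pochhammerReal (x : ℝ) (n : ℕ) : ℝ :=
  Real.Gamma (x + n) / Real.Gamma x

open Finset Polynomial

lemma gamma_ratio (x : ℝ) (hx : 0 < x) (n : ℕ) :
    Real.Gamma (x + n) = (∏ i ∈ Finset.range n, (x + i)) * Real.Gamma x := by
  induction n with
  | zero => simp
  | succ n ih =>
    have hxn : x + n ≠ 0 := by positivity
    have h : (x : ℝ) + (n + 1 : ℕ) = (x + n) + 1 := by push_cast; ring
    rw [h, Real.Gamma_add_one hxn, ih, Finset.prod_range_succ]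
    push_cast; ring

lemma alt_sum_inv (q : ℕ) : ∀ x : ℝ, 0 < x →
    ∑ t ∈ Finset.range (q+1), (-1:ℝ)^t * (q.choose t) / (x + t)
      = q.factorial / ∏ j ∈ Finset.range (q+1), (x + j) := by
  induction q with
  | zero => intro x hx; simp
  | succ q ih =>
    intro x hx
    have ext : ∑ t ∈ Finset.range (q+1), (-1:ℝ)^t * (q.choose t) / (x + t)
        = ∑ t ∈ Finset.range (q+2), (-1:ℝ)^t * (q.choose t) / (x + t) := by
      rw [Finset.sum_range_succ _ (q+1), Nat.choose_succ_self]
      simp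
    have key : ∑ t ∈ Finset.range (q+2), (-1:ℝ)^t * ((q+1).choose t) / (x + t)
        = (∑ t ∈ Finset.range (q+1), (-1:ℝ)^t * (q.choose t) / (x + t))
          - ∑ t ∈ Finset.range (q+1), (-1:ℝ)^t * (q.choose t) / ((x+1) + t) := by
      rw [ext,
        Finset.sum_range_succ' (fun t => (-1:ℝ)^t * ((q+1).choose t) / (x + t)) (q+1),
        Finset.sum_range_succ' (fun t => (-1:ℝ)^t * ((q).choose t) / (x + t)) (q+1)]
      have h1 : ∀ t ∈ Finset.range (q+1),
          (-1:ℝ)^(t+1) * ((q+1).choose (t+1)) / (x + ((t+1:ℕ):ℝ))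
          = (-1:ℝ)^(t+1) * (q.choose (t+1)) / (x + ((t+1:ℕ):ℝ))
            - (-1:ℝ)^t * (q.choose t) / ((x+1) + t) := by
        intro t _
        rw [Nat.choose_succ_succ]
        push_cast
        have hd : x + (t + 1 : ℝ) ≠ 0 := by positivity
        field_simp
        ring
      rw [Finset.sum_congr rfl h1, Finset.sum_sub_distrib]
      push_cast
      simp only [Nat.choose_zero_right, Nat.cast_one]
      ring
    rw [key, ih x hx, ih (x+1) (by positivity)]
    have hA : (0:ℝ) < ∏ j ∈ Finset.range (q+1), (x + j) := by
      apply Finset.prod_pos; intro i _; positivity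
    have hB : (0:ℝ) < ∏ j ∈ Finset.range (q+1), (x + 1 + j) := by
      apply Finset.prod_pos; intro i _; positivity
    have hP1 : ∏ j ∈ Finset.range (q+2), (x + j)
        = (∏ j ∈ Finset.range (q+1), (x + j)) * (x + (q+1)) := by
      rw [Finset.prod_range_succ]; push_cast; ring
    have hP2 : ∏ j ∈ Finset.range (q+2), (x + j)
        = x * ∏ j ∈ Finset.range (q+1), (x + 1 + j) := by
      rw [Finset.prod_range_succ' (fun j => x + (j:ℝ)) (q+1)]
      simp only [Nat.cast_zero, add_zero, Nat.cast_add, Nat.cast_one]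
      rw [mul_comm]
      congr 1
      apply Finset.prod_congr rfl; intro i _; ring
    rw [hP1]
    have hB' : ∏ j ∈ Finset.range (q+1), (x + 1 + j)
        = (∏ j ∈ Finset.range (q+1), (x + j)) * (x + (q+1)) / x := by
      field_simp
      rw [← hP1, hP2]
    rw [hB']
    have hxq : x + ((q:ℝ)+1) ≠ 0 := by positivity
    rw [Nat.factorial_succ]
    push_cast
    field_simp
    ring

lemma deg_shift_sub (P : Polynomial ℝ) (h : 0 < P.natDegree) :
    (P - P.comp (X + C 1)).natDegree < P.natDegree := by
  have hP0 : P ≠ 0 := fun hh => by simp [hh] at h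
  have hnd : (P.comp (X + C 1)).natDegree = P.natDegree := by
    rw [Polynomial.natDegree_comp, Polynomial.natDegree_X_add_C, mul_one]
  have hc0 : P.comp (X + C 1) ≠ 0 := by
    intro hh; rw [hh] at hnd; simp at hnd; omega
  have hlc : P.leadingCoeff = (P.comp (X + C 1)).leadingCoeff := by
    rw [Polynomial.leadingCoeff_comp (by rw [Polynomial.natDegree_X_add_C]; norm_num)]
    have h1 : (X + C (1:ℝ)).leadingCoeff = 1 := Polynomial.monic_X_add_C 1
    rw [h1, one_pow, mul_one]
  have hdeg : P.degree = (P.comp (X + C 1)).degree := by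
    rw [Polynomial.degree_eq_natDegree hP0, Polynomial.degree_eq_natDegree hc0, hnd]
  have hlt := Polynomial.degree_sub_lt hdeg hP0 hlc
  rcases eq_or_ne (P - P.comp (X + C 1)) 0 with h0 | h0
  · rw [h0]; simpa using h
  · exact Polynomial.natDegree_lt_natDegree h0 hlt

lemma alt_sum_poly (q : ℕ) : ∀ (P : Polynomial ℝ), P.natDegree < q →
    ∑ t ∈ Finset.range (q+1), (-1:ℝ)^t * (q.choose t) * P.eval (t:ℝ) = 0 := by
  induction q with
  | zero => intro P hP; omega
  | succ q ih =>
    intro P hP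
    rcases Nat.eq_zero_or_pos P.natDegree with h0 | h0
    · obtain ⟨c, rfl⟩ := Polynomial.natDegree_eq_zero.mp h0
      simp only [Polynomial.eval_C]
      rw [← Finset.sum_mul]
      have hz : ∑ t ∈ Finset.range (q+1+1), (-1:ℝ)^t * ((q+1).choose t) = 0 := by
        have h := Int.alternating_sum_range_choose (n := q+1)
        rw [if_neg (by omega)] at h
        exact_mod_cast congrArg (fun z : ℤ => (z : ℝ)) h
      rw [hz, zero_mul]
    · have key : ∑ t ∈ Finset.range (q+2), (-1:ℝ)^t * ((q+1).choose t) * P.eval (t:ℝ)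
          = ∑ t ∈ Finset.range (q+1), (-1:ℝ)^t * (q.choose t) *
              ((P - P.comp (X + C 1)).eval (t:ℝ)) := by
        rw [Finset.sum_range_succ'
          (fun t => (-1:ℝ)^t * ((q+1).choose t) * P.eval (t:ℝ)) (q+1)]
        have h1 : ∀ t ∈ Finset.range (q+1),
            (-1:ℝ)^(t+1) * ((q+1).choose (t+1)) * P.eval (((t+1:ℕ)):ℝ)
            = (-1:ℝ)^t * (q.choose t) * ((P - P.comp (X + C 1)).eval (t:ℝ))
              + ((-1:ℝ)^(t+1) * (q.choose (t+1)) * P.eval (((t+1:ℕ)):ℝ)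
                 - (-1:ℝ)^t * (q.choose t) * P.eval ((t:ℕ):ℝ)) := by
          intro t _
          rw [Nat.choose_succ_succ]
          simp only [Polynomial.eval_sub, Polynomial.eval_comp, Polynomial.eval_add,
            Polynomial.eval_X, Polynomial.eval_C]
          push_cast
          ring
        rw [Finset.sum_congr rfl h1, Finset.sum_add_distrib,
          Finset.sum_range_sub (fun t => (-1:ℝ)^t * (q.choose t) * P.eval ((t:ℕ):ℝ))]
        rw [Nat.choose_succ_self]
        simp
      rw [show q+1+1 = q+2 from rfl, key,
        ih _ (lt_of_lt_of_le (deg_shift_sub P h0) (by omega))]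

lemma alt_sum_poly_div (q : ℕ) (P : Polynomial ℝ) (hP : P.natDegree ≤ q)
    (b : ℝ) (hb : 0 < b) :
    ∑ t ∈ Finset.range (q+1), (-1:ℝ)^t * (q.choose t) * P.eval (t:ℝ) / (b + t)
      = P.eval (-b) * q.factorial / ∏ j ∈ Finset.range (q+1), (b + j) := by
  obtain ⟨Q, hQ⟩ := Polynomial.X_sub_C_dvd_sub_C_eval (a := -b) (p := P)
  have hQdeg : Q.natDegree < q ∨ Q = 0 := by
    rcases eq_or_ne Q 0 with h | h
    · right; exact h
    · left
      have hXC : (X - C (-b) : ℝ[X]) ≠ 0 := Polynomial.X_sub_C_ne_zero (-b)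
      have hmul : (X - C (-b) : ℝ[X]).natDegree + Q.natDegree
          = ((X - C (-b)) * Q).natDegree := (Polynomial.natDegree_mul hXC h).symm
      rw [Polynomial.natDegree_X_sub_C] at hmul
      have hle : ((X - C (-b)) * Q).natDegree ≤ q := by
        rw [← hQ]
        refine le_trans (Polynomial.natDegree_sub_le _ _) ?_
        simp [hP]
      omega
  have heval : ∀ t : ℝ, P.eval t = P.eval (-b) + (b + t) * Q.eval t := by
    intro t
    have := congrArg (Polynomial.eval t) hQ
    simp only [Polynomial.eval_sub, Polynomial.eval_mul, Polynomial.eval_X,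
      Polynomial.eval_C] at this
    linarith [this]
  have hsplit : ∀ t ∈ Finset.range (q+1),
      (-1:ℝ)^t * (q.choose t) * P.eval (t:ℝ) / (b + t)
      = P.eval (-b) * ((-1:ℝ)^t * (q.choose t) / (b + t))
        + (-1:ℝ)^t * (q.choose t) * Q.eval (t:ℝ) := by
    intro t _
    rw [heval (t:ℝ)]
    have hbt : b + (t:ℝ) ≠ 0 := by positivity
    field_simp
  rw [Finset.sum_congr rfl hsplit, Finset.sum_add_distrib, ← Finset.mul_sum,
    alt_sum_inv q b hb]
  have hz : ∑ t ∈ Finset.range (q+1), (-1:ℝ)^t * (q.choose t) * Q.eval (t:ℝ) = 0 := by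
    rcases hQdeg with h | h
    · exact alt_sum_poly q Q h
    · simp [h]
  rw [hz, add_zero, mul_div_assoc]

lemma key_sum (q : ℕ) (a b : ℝ) (hb : 0 < b) :
    ∑ t ∈ Finset.range (q+1),
      (-1:ℝ)^t * (q.choose t) * (∏ i ∈ Finset.range q, ((t:ℝ) + a + i)) / (b + t)
      = (∏ i ∈ Finset.range q, (a - b + i)) * q.factorial
          / ∏ j ∈ Finset.range (q+1), (b + j) := by
  set P : Polynomial ℝ := ∏ i ∈ Finset.range q, (X + C (a + i)) with hP
  have hdeg : P.natDegree = q := by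
    rw [hP, Polynomial.natDegree_prod _ _ (fun i _ => Polynomial.X_add_C_ne_zero _)]
    simp only [Polynomial.natDegree_X_add_C, Finset.sum_const, Finset.card_range,
      smul_eq_mul, mul_one]
  have heval : ∀ t : ℝ, P.eval t = ∏ i ∈ Finset.range q, (t + a + i) := by
    intro t
    rw [hP, Polynomial.eval_prod]
    apply Finset.prod_congr rfl
    intro i _
    simp [add_assoc]
  have hevalb : P.eval (-b) = ∏ i ∈ Finset.range q, (a - b + i) := by
    rw [heval]
    apply Finset.prod_congr rfl
    intro i _; ring
  rw [← hevalb]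
  have := alt_sum_poly_div q P (le_of_eq hdeg) b hb
  rw [← this]
  apply Finset.sum_congr rfl
  intro t _
  rw [heval]

-- pochhammer as product (for positive base)
lemma poch_prod (x : ℝ) (hx : 0 < x) (n : ℕ) :
    pochhammerReal x n = ∏ i ∈ Finset.range n, (x + i) := by
  rw [pochhammerReal, gamma_ratio x hx n,
    mul_div_assoc, div_self (Real.Gamma_pos_of_pos hx).ne', mul_one]

/-- `∫₀¹ r^{ℓ+2p} R_ℓ^q(r) r² dr = √(2ℓ+4q+3)·(p−q+1)_q / ((2ℓ+2p+3)·(ℓ+p+5/2)_q)`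
for `q ≤ p`. -/
theorem monomial_zernikeR_inner_product (ℓ p q : ℕ) (hq : q ≤ p) :
    ∫ r in (0 : ℝ)..1, r ^ (ℓ + 2 * p) * zernikeR ℓ q r * r ^ 2 =
      Real.sqrt (2 * ℓ + 4 * q + 3) * pochhammerReal ((p : ℝ) - q + 1) q /
        ((2 * ℓ + 2 * p + 3) * pochhammerReal ((ℓ : ℝ) + p + 5 / 2) q) := by
  set c : ℝ := Real.sqrt (2 * ℓ + 4 * q + 3) with hc
  set b : ℝ := (ℓ : ℝ) + p + 3/2 with hbdef
  have hb : 0 < b := by rw [hbdef]; positivity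
  -- Step 1: rewrite integrand as a finite sum of monomials
  have hig : ∀ r : ℝ, r ^ (ℓ + 2 * p) * zernikeR ℓ q r * r ^ 2
      = ∑ s ∈ Finset.range (q + 1),
          (c * ((-1 : ℝ) ^ s * (q.choose s) * genBinom ((ℓ : ℝ) + 2 * q - s + 1 / 2) q))
            * r ^ (ℓ + 2 * p + (ℓ + 2 * q - 2 * s) + 2) := by
    intro r
    rw [zernikeR, ← hc, Finset.mul_sum, Finset.mul_sum, Finset.sum_mul]
    apply Finset.sum_congr rfl
    intro s _
    rw [pow_add, pow_add]
    ring
  simp only [hig]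
  rw [intervalIntegral.integral_finset_sum (fun s _ =>
    (Continuous.intervalIntegrable (by fun_prop : Continuous fun r : ℝ =>
      (c * ((-1 : ℝ) ^ s * (q.choose s) * genBinom ((ℓ : ℝ) + 2 * q - s + 1 / 2) q))
        * r ^ (ℓ + 2 * p + (ℓ + 2 * q - 2 * s) + 2)) 0 1))]
  simp only [intervalIntegral.integral_const_mul, integral_pow, one_pow,
    zero_pow (Nat.succ_ne_zero _), sub_zero]
  -- Step 2: simplify each coefficient
  have hterm : ∀ s ∈ Finset.range (q + 1),
      (c * ((-1 : ℝ) ^ s * (q.choose s) * genBinom ((ℓ : ℝ) + 2 * q - s + 1 / 2) q))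
          * (1 / ((ℓ + 2 * p + (ℓ + 2 * q - 2 * s) + 2 : ℕ) + 1 : ℝ))
      = (c * (-1 : ℝ) ^ q / (2 * q.factorial)) *
          ((-1 : ℝ) ^ (q - s) * (q.choose (q - s)) *
            (∏ i ∈ Finset.range q, (((q - s : ℕ) : ℝ) + ((ℓ : ℝ) + 3/2) + i))
              / (b + ((q - s : ℕ) : ℝ))) := by
    intro s hs
    rw [Finset.mem_range] at hs
    have hsq : s ≤ q := by omega
    -- genBinom value
    have hx : (0:ℝ) < (ℓ : ℝ) + ((q - s : ℕ) : ℝ) + 3/2 := by positivity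
    have hgb : genBinom ((ℓ : ℝ) + 2 * q - s + 1 / 2) q
        = (∏ i ∈ Finset.range q, (((q - s : ℕ) : ℝ) + ((ℓ : ℝ) + 3/2) + i)) / q.factorial := by
      rw [genBinom]
      have e1 : (ℓ : ℝ) + 2 * q - s + 1 / 2 + 1
          = ((ℓ : ℝ) + ((q - s : ℕ) : ℝ) + 3/2) + q := by
        push_cast [Nat.cast_sub hsq]; ring
      have e2 : (ℓ : ℝ) + 2 * q - s + 1 / 2 - q + 1
          = (ℓ : ℝ) + ((q - s : ℕ) : ℝ) + 3/2 := by
        push_cast [Nat.cast_sub hsq]; ring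
      rw [e1, e2, gamma_ratio _ hx q]
      have hΓ : Real.Gamma ((ℓ : ℝ) + ((q - s : ℕ) : ℝ) + 3/2) ≠ 0 :=
        (Real.Gamma_pos_of_pos hx).ne'
      have hprod : ∏ i ∈ Finset.range q, ((ℓ : ℝ) + ((q - s : ℕ) : ℝ) + 3/2 + i)
          = ∏ i ∈ Finset.range q, (((q - s : ℕ) : ℝ) + ((ℓ : ℝ) + 3/2) + i) :=
        Finset.prod_congr rfl (fun i _ => by ring)
      rw [hprod, mul_comm ((q.factorial : ℝ)) _, ← div_div, mul_div_assoc,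
        div_self hΓ, mul_one]
    -- denominator value
    have hden : ((ℓ + 2 * p + (ℓ + 2 * q - 2 * s) + 2 : ℕ) + 1 : ℝ)
        = 2 * (b + ((q - s : ℕ) : ℝ)) := by
      push_cast [Nat.cast_sub (show 2 * s ≤ ℓ + 2 * q by omega), Nat.cast_sub hsq]
      rw [hbdef]; ring
    have hsign : (-1 : ℝ) ^ (q - s) * (-1 : ℝ) ^ s = (-1 : ℝ) ^ q := by
      rw [← pow_add, Nat.sub_add_cancel hsq]
    have hchoose : q.choose (q - s) = q.choose s := Nat.choose_symm hsq
    have hsign2 : (-1 : ℝ) ^ s = (-1 : ℝ) ^ q * (-1 : ℝ) ^ (q - s) := by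
      have h2 : (-1 : ℝ) ^ (q - s) * (-1 : ℝ) ^ (q - s) = 1 := by
        rw [← pow_add]; exact Even.neg_one_pow ⟨q - s, rfl⟩
      calc (-1 : ℝ) ^ s = ((-1 : ℝ) ^ (q - s) * (-1 : ℝ) ^ (q - s)) * (-1 : ℝ) ^ s := by
            rw [h2, one_mul]
        _ = (-1 : ℝ) ^ q * (-1 : ℝ) ^ (q - s) := by rw [mul_assoc, hsign]; ring
    rw [hgb, hden, hchoose, hsign2]
    have hbt : b + ((q - s : ℕ) : ℝ) ≠ 0 := by positivity
    have hqf : (q.factorial : ℝ) ≠ 0 := by positivity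
    field_simp
  rw [Finset.sum_congr rfl hterm, ← Finset.mul_sum]
  set a : ℝ := (ℓ : ℝ) + 3/2 with hadef
  set g : ℕ → ℝ := fun t => (-1 : ℝ) ^ t * (q.choose t) *
      (∏ i ∈ Finset.range q, ((t : ℝ) + a + i)) / (b + (t : ℝ)) with hg
  have hrefl : ∑ s ∈ Finset.range (q + 1), g (q - s) = ∑ t ∈ Finset.range (q + 1), g t := by
    rw [← Finset.sum_range_reflect g (q + 1)]
    apply Finset.sum_congr rfl
    intro s _
    congr 1
  have hgs : ∀ s ∈ Finset.range (q+1),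
      (-1 : ℝ) ^ (q - s) * (q.choose (q - s)) *
        (∏ i ∈ Finset.range q, (((q - s : ℕ) : ℝ) + ((ℓ : ℝ) + 3/2) + i))
          / (b + ((q - s : ℕ) : ℝ)) = g (q - s) := fun s _ => rfl
  rw [Finset.sum_congr rfl hgs, hrefl, hg]
  simp only []
  rw [key_sum q a b hb]
  have hpq : (0:ℝ) < (p:ℝ) - q + 1 := by
    have : (q:ℝ) ≤ p := Nat.cast_le.mpr hq; linarith
  have hp2 : (0:ℝ) < (ℓ:ℝ) + p + 5/2 := by positivity
  have hPoch1 : pochhammerReal ((p:ℝ) - q + 1) q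
      = ∏ i ∈ Finset.range q, ((p:ℝ) - i) := by
    rw [poch_prod _ hpq q,
      ← Finset.prod_range_reflect (fun i => (p:ℝ) - q + 1 + i) q]
    apply Finset.prod_congr rfl
    intro j hj
    rw [Finset.mem_range] at hj
    have h1 : q - 1 - j = q - (j + 1) := by omega
    rw [h1, Nat.cast_sub (by omega : j + 1 ≤ q)]
    push_cast
    ring
  have hPoch2 : (2 * (ℓ:ℝ) + 2 * p + 3) * pochhammerReal ((ℓ:ℝ) + p + 5/2) q
      = 2 * ∏ j ∈ Finset.range (q + 1), (b + j) := by
    rw [poch_prod _ hp2 q, Finset.prod_range_succ' (fun j => b + (j:ℝ)) q]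
    have hcg : ∀ i ∈ Finset.range q, (ℓ:ℝ) + p + 5/2 + i = b + ((i + 1 : ℕ):ℝ) := by
      intro i _; rw [hbdef]; push_cast; ring
    rw [Finset.prod_congr rfl hcg, hbdef]
    push_cast
    ring
  have hab : ∏ i ∈ Finset.range q, (a - b + (i:ℝ))
      = (-1:ℝ)^q * ∏ i ∈ Finset.range q, ((p:ℝ) - i) := by
    have hcg : ∀ i ∈ Finset.range q, a - b + (i:ℝ) = (-1) * ((p:ℝ) - i) := by
      intro i _; rw [hadef, hbdef]; ring
    rw [Finset.prod_congr rfl hcg, Finset.prod_mul_distrib, Finset.prod_const,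
      Finset.card_range]
  rw [hPoch1, hPoch2, hab]
  have h2q : (-1:ℝ)^q * (-1:ℝ)^q = 1 := by
    rw [← pow_add]; exact Even.neg_one_pow ⟨q, rfl⟩
  have hD : (0:ℝ) < ∏ j ∈ Finset.range (q + 1), (b + j) := by
    apply Finset.prod_pos; intro j _; positivity
  have hqf : (q.factorial : ℝ) ≠ 0 := by positivity
  calc c * (-1)^q / (2 * q.factorial) *
        ((-1:ℝ)^q * (∏ i ∈ Finset.range q, ((p:ℝ) - i)) * q.factorial
          / ∏ j ∈ Finset.range (q + 1), (b + j))
      = ((-1:ℝ)^q * (-1:ℝ)^q) * (c * (∏ i ∈ Finset.range q, ((p:ℝ) - i)) * q.factorial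
          / (2 * q.factorial * ∏ j ∈ Finset.range (q + 1), (b + j))) := by
        ring
    _ = c * (∏ i ∈ Finset.range q, ((p:ℝ) - i))
          / (2 * ∏ j ∈ Finset.range (q + 1), (b + j)) := by
        rw [h2q, one_mul,
          show c * (∏ i ∈ Finset.range q, ((p:ℝ) - i)) * q.factorial
            = (q.factorial : ℝ) * (c * ∏ i ∈ Finset.range q, ((p:ℝ) - i)) by ring,
          show (2:ℝ) * q.factorial * ∏ j ∈ Finset.range (q + 1), (b + j)
            = (q.factorial : ℝ) * (2 * ∏ j ∈ Finset.range (q + 1), (b + j)) by ring]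
        exact mul_div_mul_left _ _ hqf


end
end

section
/- For fixed ℓ ∈ ℕ, the linear span of the monomials {r^{ℓ+2p} : p ∈ ℕ} is dense in L²((0,1)). -/
open MeasureTheory Set
open scoped ENNReal

lemma poly_mem_span (ℓ : ℕ) (q : Polynomial ℝ) :
    (fun r : ℝ => r ^ ℓ * q.eval (r ^ 2)) ∈
      Submodule.span ℝ (Set.range fun p : ℕ => fun r : ℝ => r ^ (ℓ + 2 * p)) := by
  induction q using Polynomial.induction_on' with
  | add p q hp hq =>
      have h : (fun r : ℝ => r ^ ℓ * (p + q).eval (r ^ 2))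
          = (fun r : ℝ => r ^ ℓ * p.eval (r ^ 2)) + fun r : ℝ => r ^ ℓ * q.eval (r ^ 2) := by
        funext r; simp [mul_add]
      rw [h]; exact Submodule.add_mem _ hp hq
  | monomial n a =>
      have h : (fun r : ℝ => r ^ ℓ * (Polynomial.monomial n a).eval (r ^ 2))
          = a • fun r : ℝ => r ^ (ℓ + 2 * n) := by
        funext r
        simp only [Polynomial.eval_monomial, Pi.smul_apply, smul_eq_mul, pow_add, pow_mul]
        ring
      rw [h]
      exact Submodule.smul_mem _ _ (Submodule.subset_span ⟨n, rfl⟩)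

/-- For fixed `ℓ`, the span of the monomials `{r^{ℓ+2p} : p ∈ ℕ}` is dense in `L²((0,1))`:
every `f ∈ L²((0,1))` can be approximated in `L²`-norm by elements of the span. -/
theorem span_monomials_dense_L2 (ℓ : ℕ) :
    ∀ f : ℝ → ℝ, MemLp f 2 (volume.restrict (Set.Ioo (0 : ℝ) 1)) →
      ∀ ε : ℝ, 0 < ε →
        ∃ g ∈ Submodule.span ℝ (Set.range fun p : ℕ => fun r : ℝ => r ^ (ℓ + 2 * p)),
          eLpNorm (f - g) 2 (volume.restrict (Set.Ioo (0 : ℝ) 1)) < ENNReal.ofReal ε := by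
  intro f hf ε hε
  set μ := volume.restrict (Set.Ioo (0 : ℝ) 1) with hμdef
  have hμ_ne : volume (Set.Ioo (0:ℝ) 1) ≠ ∞ := by simp [Real.volume_Ioo]
  haveI : μ.Regular := Measure.Regular.restrict_of_measure_ne_top hμ_ne
  have hμ_univ : μ Set.univ = 1 := by
    simp [hμdef, Real.volume_Ioo]
  have hε4 : (0:ℝ) < ε / 4 := by linarith
  -- Step 1: continuous compactly supported approximation
  obtain ⟨g, gsupp, hfg, gcont, -⟩ :=
    hf.exists_hasCompactSupport_eLpNorm_sub_le (by norm_num)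
      (ε := ENNReal.ofReal (ε / 4)) (by simp [hε4])
  -- bound on g
  obtain ⟨M0, hM0⟩ := gsupp.exists_bound_of_continuous gcont
  set M : ℝ := max M0 0 + 1 with hMdef
  have hM_pos : 0 < M := by positivity
  have hM : ∀ x, |g x| ≤ M := by
    intro x
    calc |g x| = ‖g x‖ := rfl
    _ ≤ M0 := hM0 x
    _ ≤ M := by simp [hMdef]; linarith [le_max_left M0 0]
  -- cutoff parameters
  set c : ℝ := ε / (4 * M) with hcdef
  have hc_pos : 0 < c := by positivity
  set δ : ℝ := c ^ 2 / 2 with hδdef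
  have hδ_pos : 0 < δ := by positivity
  -- cutoff function
  set χ : ℝ → ℝ := fun r => min 1 (max 0 ((r - δ) / δ)) with hχdef
  have χcont : Continuous χ := by
    apply continuous_const.min
    exact continuous_const.max ((continuous_id.sub continuous_const).div_const δ)
  have χ_nonneg : ∀ r, 0 ≤ χ r := fun r => le_min zero_le_one (le_max_left _ _)
  have χ_le_one : ∀ r, χ r ≤ 1 := fun r => min_le_left _ _
  have χ_zero : ∀ r, r ≤ δ → χ r = 0 := by
    intro r hr
    have : (r - δ) / δ ≤ 0 := div_nonpos_of_nonpos_of_nonneg (by linarith) hδ_pos.le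
    simp [hχdef, max_eq_left this]
  have χ_one : ∀ r, 2 * δ ≤ r → χ r = 1 := by
    intro r hr
    have h1 : (1:ℝ) ≤ (r - δ) / δ := (le_div_iff₀ hδ_pos).2 (by linarith)
    have h0 : (0:ℝ) ≤ (r - δ) / δ := by linarith
    simp [hχdef, max_eq_right h0, min_eq_left h1]
  -- the continuous function to approximate by polynomials
  set H : ℝ → ℝ := fun s => g (Real.sqrt s) * χ (Real.sqrt s) / max (Real.sqrt s) δ ^ ℓ
    with hHdef
  have Hcont : Continuous H := by
    apply Continuous.div
    · exact (gcont.comp Real.continuous_sqrt).mul (χcont.comp Real.continuous_sqrt)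
    · exact (Real.continuous_sqrt.max continuous_const).pow ℓ
    · intro s
      have h := lt_max_of_lt_right (b := Real.sqrt s) hδ_pos
      exact (pow_pos h ℓ).ne'
  obtain ⟨q, hq⟩ := exists_polynomial_near_of_continuousOn 0 1 H Hcont.continuousOn
    (ε / 4) hε4
  set G : ℝ → ℝ := fun r => r ^ ℓ * q.eval (r ^ 2) with hGdef
  have hGmem := poly_mem_span ℓ q
  refine ⟨G, hGmem, ?_⟩
  set g₁ : ℝ → ℝ := fun r => g r * χ r with hg₁def
  have g₁cont : Continuous g₁ := gcont.mul χcont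
  have Gcont : Continuous G := by
    apply (continuous_pow ℓ).mul
    exact q.continuous_aeval.comp (continuous_pow 2)
  -- key identity on (0,1)
  have key : ∀ r : ℝ, r ∈ Set.Ioo (0:ℝ) 1 → r ^ ℓ * H (r ^ 2) = g₁ r := by
    intro r hr
    have hsqrt : Real.sqrt (r ^ 2) = r := Real.sqrt_sq hr.1.le
    rcases le_or_gt r δ with h | h
    · simp [hHdef, hg₁def, hsqrt, χ_zero r h]
    · have hmax : max r δ = r := max_eq_left h.le
      have hrne : r ^ ℓ ≠ 0 := pow_ne_zero ℓ hr.1.ne'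
      simp only [hHdef, hg₁def, hsqrt, hmax]
      field_simp
  -- pointwise estimate on (0,1) for g₁ - G
  have ptwise : ∀ r : ℝ, r ∈ Set.Ioo (0:ℝ) 1 → |g₁ r - G r| ≤ ε / 4 := by
    intro r hr
    have hr2 : r ^ 2 ∈ Set.Icc (0:ℝ) 1 := by
      constructor
      · positivity
      · nlinarith [hr.1, hr.2]
    have h1 : g₁ r - G r = r ^ ℓ * (H (r ^ 2) - q.eval (r ^ 2)) := by
      rw [← key r hr]; simp [hGdef]; ring
    have hrl : r ^ ℓ ≤ 1 := pow_le_one₀ hr.1.le hr.2.le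
    have hrl0 : 0 ≤ r ^ ℓ := pow_nonneg hr.1.le ℓ
    rw [h1, abs_mul, abs_of_nonneg hrl0]
    have := hq (r ^ 2) hr2
    have h2 : |H (r ^ 2) - q.eval (r ^ 2)| ≤ ε / 4 := by
      rw [abs_sub_comm]; exact this.le
    calc r ^ ℓ * |H (r ^ 2) - q.eval (r ^ 2)| ≤ 1 * (ε / 4) :=
          mul_le_mul hrl h2 (abs_nonneg _) zero_le_one
      _ = ε / 4 := one_mul _
  -- L² estimate for g₁ - G
  have bound3 : eLpNorm (g₁ - G) 2 μ ≤ ENNReal.ofReal (ε / 4) := by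
    have hae : ∀ᵐ x ∂μ, ‖(g₁ - G) x‖ ≤ ε / 4 := by
      rw [hμdef, ae_restrict_iff' measurableSet_Ioo]
      exact ae_of_all _ fun r hr => ptwise r hr
    calc eLpNorm (g₁ - G) 2 μ ≤ μ Set.univ ^ (2:ℝ≥0∞).toReal⁻¹ * ENNReal.ofReal (ε/4) :=
          eLpNorm_le_of_ae_bound hae
      _ = ENNReal.ofReal (ε/4) := by rw [hμ_univ]; simp
  -- L² estimate for g - g₁
  have bound2 : eLpNorm (g - g₁) 2 μ ≤ ENNReal.ofReal (ε / 4) := by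
    have hsub : g - g₁ = (Set.Iio (2 * δ)).indicator (g - g₁) := by
      symm
      apply Set.indicator_eq_self.2
      intro r hr
      simp only [Function.mem_support, Pi.sub_apply, hg₁def, ne_eq] at hr
      by_contra hmem
      simp only [Set.mem_Iio, not_lt] at hmem
      exact hr (by rw [χ_one r hmem]; ring)
    have hbd : ∀ᵐ x ∂(μ.restrict (Set.Iio (2*δ))), ‖(g - g₁) x‖ ≤ M := by
      apply ae_of_all
      intro x
      simp only [Pi.sub_apply, hg₁def, Real.norm_eq_abs]
      have : g x - g x * χ x = g x * (1 - χ x) := by ring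
      rw [this, abs_mul]
      have h1 : |1 - χ x| ≤ 1 := by
        rw [abs_le]; constructor <;> [linarith [χ_le_one x]; linarith [χ_nonneg x]]
      calc |g x| * |1 - χ x| ≤ M * 1 :=
            mul_le_mul (hM x) h1 (abs_nonneg _) hM_pos.le
        _ = M := mul_one M
    have hmeas : μ (Set.Iio (2*δ)) ≤ ENNReal.ofReal (2*δ) := by
      rw [hμdef, Measure.restrict_apply measurableSet_Iio]
      calc volume (Set.Iio (2*δ) ∩ Set.Ioo (0:ℝ) 1) ≤ volume (Set.Ioo (0:ℝ) (2*δ)) := by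
            apply measure_mono
            rintro x ⟨hx1, hx2, -⟩
            exact ⟨hx2, hx1⟩
        _ = ENNReal.ofReal (2*δ) := by rw [Real.volume_Ioo]; norm_num
    calc eLpNorm (g - g₁) 2 μ
        = eLpNorm ((Set.Iio (2*δ)).indicator (g - g₁)) 2 μ := by rw [← hsub]
      _ = eLpNorm (g - g₁) 2 (μ.restrict (Set.Iio (2*δ))) :=
          eLpNorm_indicator_eq_eLpNorm_restrict measurableSet_Iio
      _ ≤ (μ.restrict (Set.Iio (2*δ))) Set.univ ^ (2:ℝ≥0∞).toReal⁻¹ * ENNReal.ofReal M :=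
          eLpNorm_le_of_ae_bound hbd
      _ ≤ (ENNReal.ofReal (2*δ)) ^ (2:ℝ≥0∞).toReal⁻¹ * ENNReal.ofReal M := by
          gcongr
          rw [Measure.restrict_apply_univ]
          exact hmeas
      _ = ENNReal.ofReal (ε / 4) := by
          have h2δ : 2 * δ = c ^ 2 := by rw [hδdef]; ring
          rw [h2δ]
          have : (ENNReal.ofReal (c ^ 2)) ^ ((2:ℝ≥0∞).toReal)⁻¹
              = ENNReal.ofReal c := by
            rw [ENNReal.toReal_ofNat, ENNReal.ofReal_rpow_of_pos (by positivity)]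
            congr 1
            rw [← Real.rpow_natCast c 2, ← Real.rpow_mul hc_pos.le]
            norm_num
          rw [this, ← ENNReal.ofReal_mul hc_pos.le]
          congr 1
          rw [hcdef]
          field_simp
  -- triangle inequality
  have hsplit : f - G = (f - g) + ((g - g₁) + (g₁ - G)) := by
    funext r; simp only [Pi.add_apply, Pi.sub_apply]; ring
  have m1 : AEStronglyMeasurable (f - g) μ :=
    hf.aestronglyMeasurable.sub gcont.aestronglyMeasurable
  have m2 : AEStronglyMeasurable (g - g₁) μ :=
    gcont.aestronglyMeasurable.sub g₁cont.aestronglyMeasurable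
  have m3 : AEStronglyMeasurable (g₁ - G) μ :=
    g₁cont.aestronglyMeasurable.sub Gcont.aestronglyMeasurable
  calc eLpNorm (f - G) 2 μ
      = eLpNorm ((f - g) + ((g - g₁) + (g₁ - G))) 2 μ := by rw [← hsplit]
    _ ≤ eLpNorm (f - g) 2 μ + eLpNorm ((g - g₁) + (g₁ - G)) 2 μ :=
        eLpNorm_add_le m1 (m2.add m3) one_le_two
    _ ≤ eLpNorm (f - g) 2 μ + (eLpNorm (g - g₁) 2 μ + eLpNorm (g₁ - G) 2 μ) := by
        gcongr
        exact eLpNorm_add_le m2 m3 one_le_two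
    _ ≤ ENNReal.ofReal (ε/4) + (ENNReal.ofReal (ε/4) + ENNReal.ofReal (ε/4)) := by
        gcongr
    _ = ENNReal.ofReal (3 * (ε/4)) := by
        rw [← ENNReal.ofReal_add hε4.le hε4.le, ← ENNReal.ofReal_add hε4.le (by linarith)]
        ring_nf
    _ < ENNReal.ofReal ε := by
        rw [ENNReal.ofReal_lt_ofReal_iff hε]
        linarith
end
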